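/- arXiv:1411.4728 — 2 statements merged into one kernel-verified Lean document; each statement's English description precedes it below -/
import Mathlib

section
/- A square-free positive integer n is a congruent number if and only if the elliptic curve E_n : n y^2 = x^3 - x has a rational point (x, y) with y ≠ 0. -/
/-!
Rational right triangles `(a, b, c)` of area `n` correspond to points of `E_n` with `y ≠ 0`:
`x = b / (c - a)`, `y = 2 / (c - a)`, with inverse `a = (x² - 1) / y`, `b = 2x / y`,
`c = (x² + 1) / y`. The inverse may produce legs of the wrong sign, which taking absolute values
repairs since the area `n` is positive.
-/

/-- A positive integer `n` is a congruent number if it is the area of a right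
triangle with rational side lengths. -/
def IsCongruentNumber (n : ℕ) : Prop :=
  ∃ a b c : ℚ, 0 < a ∧ 0 < b ∧ 0 < c ∧ a ^ 2 + b ^ 2 = c ^ 2 ∧ a * b / 2 = n

section Field

variable {K : Type*} [Field K]

theorem exists_point_of_pythagorean [NeZero (2 : K)] {a b c n : K} (hb : b ≠ 0)
    (hpy : a ^ 2 + b ^ 2 = c ^ 2) (harea : a * b = 2 * n) :
    ∃ x y : K, y ≠ 0 ∧ n * y ^ 2 = x ^ 3 - x := by
  have hca : c - a ≠ 0 := by
    intro h
    have hb2 : b ^ 2 = 0 := by linear_combination hpy + (c + a) * h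
    exact hb (pow_eq_zero_iff two_ne_zero |>.mp hb2)
  refine ⟨b / (c - a), 2 / (c - a), div_ne_zero two_ne_zero hca, ?_⟩
  field_simp
  linear_combination (-b) * hpy - 2 * (c - a) * harea

theorem pythagorean_of_point {n x y : K} (hy : y ≠ 0) (hxy : n * y ^ 2 = x ^ 3 - x) :
    ((x ^ 2 - 1) / y) ^ 2 + (2 * x / y) ^ 2 = ((x ^ 2 + 1) / y) ^ 2 ∧
      (x ^ 2 - 1) / y * (2 * x / y) = 2 * n := by
  constructor
  · field_simp
    ring
  · field_simp
    linear_combination (-2) * hxy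

end Field

theorem isCongruentNumber_of_pythagorean {n : ℕ} (hn : 0 < n) {a b c : ℚ}
    (hpy : a ^ 2 + b ^ 2 = c ^ 2) (harea : a * b = 2 * n) : IsCongruentNumber n := by
  have hab : a * b ≠ 0 := by rw [harea]; positivity
  have ha : a ≠ 0 := left_ne_zero_of_mul hab
  have hc : c ≠ 0 := by
    rintro rfl
    have : 0 < a ^ 2 + b ^ 2 := by positivity
    linarith
  refine ⟨|a|, |b|, |c|, abs_pos.2 ha, abs_pos.2 (right_ne_zero_of_mul hab), abs_pos.2 hc,
    by simpa only [sq_abs] using hpy, ?_⟩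
  rw [← abs_mul, harea, abs_of_pos (by positivity)]
  ring

theorem congruent_iff_rational_point_general (n : ℕ) (hn : 0 < n) :
    IsCongruentNumber n ↔
      ∃ x y : ℚ, y ≠ 0 ∧ (n : ℚ) * y ^ 2 = x ^ 3 - x := by
  constructor
  · rintro ⟨a, b, c, -, hb, -, hpy, harea⟩
    exact exists_point_of_pythagorean hb.ne' hpy (by linear_combination 2 * harea)
  · rintro ⟨x, y, hy, hxy⟩
    obtain ⟨hpy, harea⟩ := pythagorean_of_point hy hxy
    exact isCongruentNumber_of_pythagorean hn hpy harea

theorem congruent_iff_rational_point (n : ℕ) (hn : 0 < n) (hsq : Squarefree n) :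
    IsCongruentNumber n ↔
      ∃ x y : ℚ, y ≠ 0 ∧ (n : ℚ) * y ^ 2 = x ^ 3 - x :=
  congruent_iff_rational_point_general n hn
end

section
/- Let Q : D → ℤ be a function on the set D of positive divisors of a fixed square-free positive integer N with Q(1) = 1, and define L : D → ℤ by the recursion L(1) = 1 and L(n) = Q(n) - ∑ L(d₁)L(d₂), where the sum is over unordered factorizations n = d₁d₂ with d₁, d₂ > 1 coprime and d₂ ≡ 1 (mod 8). Then for every n ∈ D, L(n) ≡ ∑ ∏ᵢ Q(dᵢ) (mod 2), where the sum is over unordered factorizations n = d₀d₁⋯dₗ into pairwise coprime factors dᵢ > 1 with dᵢ ≡ 1 (mod 8) for all i ≥ 1. -/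
/-!
Modulo 2 the sign in the recursion disappears, so by induction it suffices to show that
`s(n) = ∑_{F} ∏_{d ∈ F} Q(d)` satisfies `s(n) = Q(n) + ∑_{{d₁, d₂}} s(d₁) s(d₂)` over `𝔽₂`.
Orient each splitting `{d₁, d₂}` by the factor `d₁` divisible by the least prime `p` of `n`, and
add the trivial splitting `d₁ = n`, `d₂ = 1`. Joining factorizations of `d₁` and `d₂` gives a
factorization `H` of `n` (one of `d₁`, `d₂` is `≡ 1 mod 8`, which forces all factors on that side
to be `≡ 1 mod 8`); conversely `H` and any subset of `H` containing its factor divisible by `p`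
determine the splitting and both factorizations. Hence every `H` is counted `2 ^ (|H| - 1)` times,
an odd number only for `H = {n}`, and the oriented sum equals `Q(n)`.
-/

open Finset

def coprimeFactorizations (m n : ℕ) : Finset (Finset ℕ) :=
  (n.divisors.erase 1).powerset.filter fun F => F.prod id = n ∧
    (∀ d ∈ F, ∀ e ∈ F, d ≠ e → Nat.Coprime d e) ∧ (F.filter fun d => d % m ≠ 1).card ≤ 1

def coprimeSplittings (m n : ℕ) : Finset (Finset ℕ) :=
  (n.divisors.erase 1).powerset.filter fun F => F.card = 2 ∧ F.prod id = n ∧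
    (∀ d ∈ F, ∀ e ∈ F, d ≠ e → Nat.Coprime d e) ∧ ∃ d ∈ F, d % m = 1

/-- Each splitting `{d, n / d}` of `n` is recorded by its factor divisible by `n.minFac`; `d = n`
records the trivial splitting. -/
def splittingDivisors (m n : ℕ) : Finset ℕ :=
  n.divisors.filter fun d => n.minFac ∣ d ∧ (d % m = 1 ∨ n / d % m = 1)

def factorizationSum {R : Type*} [CommSemiring R] (m : ℕ) (q : ℕ → R) (n : ℕ) : R :=
  ∑ F ∈ coprimeFactorizations m n, ∏ d ∈ F, q d

theorem Finset.card_filter_mem_powerset {α : Type*} [DecidableEq α] {s : Finset α} {a : α}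
    (h : a ∈ s) : #{t ∈ s.powerset | a ∈ t} = 2 ^ (#s - 1) := by
  rw [← card_erase_of_mem h, ← card_powerset]
  refine card_nbij' (·.erase a) (insert a) ?_ ?_ ?_ ?_
  · intro t ht
    rw [mem_coe, mem_filter, mem_powerset] at ht
    exact mem_coe.2 (mem_powerset.2 (erase_subset_erase a ht.1))
  · intro t ht
    rw [mem_coe, mem_powerset] at ht
    exact mem_filter.2 ⟨mem_powerset.2 (insert_subset h (ht.trans (erase_subset a s))),
      mem_insert_self a t⟩
  · intro t ht
    exact insert_erase (mem_filter.1 ht).2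
  · intro t ht
    exact erase_insert fun hat => by simpa using mem_powerset.1 ht hat

theorem prod_mod_eq_one_mod {m : ℕ} {F : Finset ℕ} (h : ∀ d ∈ F, d % m = 1) :
    F.prod id % m = 1 % m := by
  rw [prod_nat_mod, prod_eq_one (f := fun d => id d % m) h]

section

variable {m n : ℕ} {F G H : Finset ℕ}

theorem mem_coprimeFactorizations (hn : n ≠ 0) :
    F ∈ coprimeFactorizations m n ↔ 1 ∉ F ∧ F.prod id = n ∧
      (∀ d ∈ F, ∀ e ∈ F, d ≠ e → Nat.Coprime d e) ∧ (F.filter fun d => d % m ≠ 1).card ≤ 1 := by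
  simp only [coprimeFactorizations, mem_filter, mem_powerset]
  refine ⟨fun ⟨hsub, h⟩ => ⟨fun h1 => by simpa using hsub h1, h⟩,
    fun ⟨h1, hprod, h⟩ => ⟨?_, hprod, h⟩⟩
  exact fun d hd => mem_erase.2 ⟨ne_of_mem_of_not_mem hd h1,
    Nat.mem_divisors.2 ⟨hprod ▸ dvd_prod_of_mem id hd, hn⟩⟩

theorem ne_zero_of_mem_coprimeFactorizations (hF : F ∈ coprimeFactorizations m n) : n ≠ 0 := by
  rintro rfl
  obtain ⟨hsub, hprod, -⟩ := mem_filter.1 hF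
  simp only [Nat.divisors_zero, erase_empty, powerset_empty, mem_singleton] at hsub
  simp [hsub] at hprod

theorem dvd_of_mem_coprimeFactorizations (hF : F ∈ coprimeFactorizations m n) {d : ℕ}
    (hd : d ∈ F) : d ∣ n :=
  (mem_filter.1 hF).2.1 ▸ dvd_prod_of_mem id hd

theorem one_lt_of_mem_coprimeFactorizations (hF : F ∈ coprimeFactorizations m n) {d : ℕ}
    (hd : d ∈ F) : 1 < d := by
  have hd1 := (mem_erase.1 (mem_powerset.1 (mem_filter.1 hF).1 hd)).1
  have hd0 : d ≠ 0 := by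
    rintro rfl
    exact ne_zero_of_mem_coprimeFactorizations hF
      (Nat.eq_zero_of_zero_dvd (dvd_of_mem_coprimeFactorizations hF hd))
  omega

theorem factorizationSum_one {R : Type*} [CommSemiring R] (q : ℕ → R) :
    factorizationSum m q 1 = 1 := by
  rw [factorizationSum, coprimeFactorizations, Nat.divisors_one, erase_singleton, powerset_empty,
    filter_singleton, if_pos (by simp)]
  simp

theorem singleton_mem_coprimeFactorizations (hn : 1 < n) : {n} ∈ coprimeFactorizations m n := by
  rw [mem_coprimeFactorizations (by omega)]
  refine ⟨by simp; omega, by simp, by simp, (card_filter_le _ _).trans (by simp)⟩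

theorem two_le_card_of_mem_coprimeFactorizations (hH : H ∈ coprimeFactorizations m n)
    (hn : 1 < n) (hne : H ≠ {n}) : 2 ≤ #H := by
  by_contra! h
  obtain ⟨x, hx⟩ := card_le_one_iff_subset_singleton.1 (Nat.le_of_lt_succ h)
  have hprod := (mem_filter.1 hH).2.1
  rcases subset_singleton_iff.1 hx with rfl | rfl
  · rw [prod_empty] at hprod
    omega
  · rw [prod_singleton, id] at hprod
    exact hne (hprod ▸ rfl)

theorem filter_mod_ne_one_eq_empty (hF : F ∈ coprimeFactorizations m n) (hn : n % m = 1) :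
    F.filter (fun d => d % m ≠ 1) = ∅ := by
  obtain ⟨-, hprod, -, hcard⟩ := mem_filter.1 hF
  by_contra hne
  obtain ⟨b, hb⟩ := card_eq_one.1 (le_antisymm hcard (card_pos.2 (nonempty_iff_ne_empty.2 hne)))
  have hbad : b % m ≠ 1 := (mem_filter.1 (hb.symm ▸ mem_singleton_self b :)).2
  have hgood : (F.filter fun d => ¬d % m ≠ 1).prod id % m = 1 % m :=
    prod_mod_eq_one_mod fun d hd => not_not.1 (mem_filter.1 hd).2
  have hnb : n % m = b % m := by
    rw [← hprod, ← prod_filter_mul_prod_filter_not F (fun d => d % m ≠ 1), hb, prod_singleton,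
      Nat.mul_mod, hgood, ← Nat.mul_mod, mul_one, id]
  exact hbad (hnb ▸ hn)

theorem disjoint_of_mem_coprimeFactorizations {a b : ℕ} (hF : F ∈ coprimeFactorizations m a)
    (hG : G ∈ coprimeFactorizations m b) (hab : Nat.Coprime a b) : Disjoint F G := by
  refine disjoint_left.2 fun d hdF hdG => ?_
  have hd := Nat.dvd_one.1 (hab ▸ Nat.dvd_gcd (dvd_of_mem_coprimeFactorizations hF hdF)
    (dvd_of_mem_coprimeFactorizations hG hdG))
  exact (one_lt_of_mem_coprimeFactorizations hF hdF).ne' hd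

theorem union_mem_coprimeFactorizations {a b : ℕ} (hF : F ∈ coprimeFactorizations m a)
    (hG : G ∈ coprimeFactorizations m b) (hab : Nat.Coprime a b) (hgood : a % m = 1 ∨ b % m = 1) :
    F ∪ G ∈ coprimeFactorizations m (a * b) := by
  have ha := ne_zero_of_mem_coprimeFactorizations hF
  have hb := ne_zero_of_mem_coprimeFactorizations hG
  obtain ⟨hF1, hFprod, hFcop, hFbad⟩ := (mem_coprimeFactorizations ha).1 hF
  obtain ⟨hG1, hGprod, hGcop, hGbad⟩ := (mem_coprimeFactorizations hb).1 hG
  have hcross : ∀ x ∈ F, ∀ y ∈ G, Nat.Coprime x y := fun x hx y hy =>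
    hab.of_dvd (dvd_of_mem_coprimeFactorizations hF hx) (dvd_of_mem_coprimeFactorizations hG hy)
  refine (mem_coprimeFactorizations (mul_ne_zero ha hb)).2 ⟨by simp [hF1, hG1], ?_, ?_, ?_⟩
  · rw [prod_union (disjoint_of_mem_coprimeFactorizations hF hG hab), hFprod, hGprod]
  · simp only [mem_union]
    rintro x (hx | hx) y (hy | hy) hxy
    exacts [hFcop x hx y hy hxy, hcross x hx y hy, (hcross y hy x hx).symm, hGcop x hx y hy hxy]
  · rw [filter_union]
    rcases hgood with h | h
    · simpa [filter_mod_ne_one_eq_empty hF h] using hGbad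
    · simpa [filter_mod_ne_one_eq_empty hG h] using hFbad

theorem prod_mem_coprimeFactorizations_of_subset (hH : H ∈ coprimeFactorizations m n)
    (hFH : F ⊆ H) : F ∈ coprimeFactorizations m (F.prod id) := by
  have hn := ne_zero_of_mem_coprimeFactorizations hH
  obtain ⟨hH1, hHprod, hHcop, hHbad⟩ := (mem_coprimeFactorizations hn).1 hH
  have hF0 : F.prod id ≠ 0 := fun h0 =>
    hn (hHprod ▸ Nat.eq_zero_of_zero_dvd (h0 ▸ prod_dvd_prod_of_subset F H id hFH))
  exact (mem_coprimeFactorizations hF0).2 ⟨fun h1 => hH1 (hFH h1), rfl,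
    fun d hd e he => hHcop d (hFH hd) e (hFH he),
    (card_le_card (filter_subset_filter _ hFH)).trans hHbad⟩

theorem prod_sdiff_mem_coprimeFactorizations (hH : H ∈ coprimeFactorizations m n)
    (hFH : F ⊆ H) : H \ F ∈ coprimeFactorizations m (n / F.prod id) := by
  have hprod : (H \ F).prod id * F.prod id = n := by
    rw [prod_sdiff hFH]; exact (mem_filter.1 hH).2.1
  have hF0 : 0 < F.prod id := Nat.pos_of_ne_zero fun h0 => by
    rw [h0, mul_zero] at hprod; exact ne_zero_of_mem_coprimeFactorizations hH hprod.symm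
  rw [← hprod, Nat.mul_div_cancel _ hF0]
  exact prod_mem_coprimeFactorizations_of_subset hH sdiff_subset

theorem prod_mod_eq_one_or_prod_sdiff_mod_eq_one (hm : 1 < m) (hH : H ∈ coprimeFactorizations m n)
    (hFH : F ⊆ H) : F.prod id % m = 1 ∨ (H \ F).prod id % m = 1 := by
  have hone : 1 % m = 1 := Nat.one_mod_eq_one.2 (by omega)
  by_contra! h
  obtain ⟨x, hxF, hx⟩ : ∃ x ∈ F, x % m ≠ 1 := by
    by_contra! hF; exact h.1 (hone ▸ prod_mod_eq_one_mod hF)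
  obtain ⟨y, hyH, hy⟩ : ∃ y ∈ H \ F, y % m ≠ 1 := by
    by_contra! hG; exact h.2 (hone ▸ prod_mod_eq_one_mod hG)
  have hxy : x ≠ y := fun hxy => (mem_sdiff.1 hyH).2 (hxy ▸ hxF)
  have hcard := (mem_filter.1 hH).2.2.2
  have : 1 < #(H.filter fun d => d % m ≠ 1) :=
    one_lt_card.2 ⟨x, mem_filter.2 ⟨hFH hxF, hx⟩, y, mem_filter.2 ⟨(mem_sdiff.1 hyH).1, hy⟩, hxy⟩
  omega

theorem exists_mem_forall_dvd_prod_iff_mem {p : ℕ} (hp : p.Prime)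
    (hH : H ∈ coprimeFactorizations m n) (hpn : p ∣ n) : ∃ h ∈ H, ∀ F ⊆ H, p ∣ F.prod id ↔ h ∈ F := by
  obtain ⟨-, hprod, hcop, -⟩ := mem_filter.1 hH
  obtain ⟨h, hh, hph⟩ := hp.prime.exists_mem_finset_dvd (hprod ▸ hpn)
  refine ⟨h, hh, fun F hFH => ⟨fun hpF => ?_, fun hhF => (hph.trans (dvd_prod_of_mem id hhF))⟩⟩
  obtain ⟨x, hx, hpx⟩ := hp.prime.exists_mem_finset_dvd hpF
  by_contra hhF
  have hxh : x ≠ h := fun hxh => hhF (hxh ▸ hx)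
  exact hp.one_lt.ne' (Nat.dvd_one.1 (hcop x (hFH hx) h hh hxh ▸ Nat.dvd_gcd hpx hph))

theorem card_filter_minFac_dvd_prod (hH : H ∈ coprimeFactorizations m n) (hn : 1 < n) :
    #{F ∈ H.powerset | n.minFac ∣ F.prod id} = 2 ^ (#H - 1) := by
  obtain ⟨h, hh, hiff⟩ :=
    exists_mem_forall_dvd_prod_iff_mem (Nat.minFac_prime (by omega)) hH (Nat.minFac_dvd n)
  rw [filter_congr fun F hF => hiff F (mem_powerset.1 hF), card_filter_mem_powerset hh]

theorem mem_splittingDivisors {d : ℕ} :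
    d ∈ splittingDivisors m n ↔ d ∣ n ∧ n ≠ 0 ∧ n.minFac ∣ d ∧ (d % m = 1 ∨ n / d % m = 1) := by
  simp only [splittingDivisors, mem_filter, Nat.mem_divisors, and_assoc]

theorem self_mem_splittingDivisors (hm : 1 < m) (hn : n ≠ 0) : n ∈ splittingDivisors m n :=
  mem_splittingDivisors.2 ⟨dvd_rfl, hn, Nat.minFac_dvd n,
    Or.inr (by rw [Nat.div_self (Nat.pos_of_ne_zero hn), Nat.one_mod_eq_one.2 (by omega)])⟩

theorem coprime_div_of_mem_splittingDivisors (hn : Squarefree n) {d : ℕ}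
    (hd : d ∈ splittingDivisors m n) : Nat.Coprime d (n / d) :=
  Nat.coprime_of_squarefree_mul (by rwa [Nat.mul_div_cancel' (mem_splittingDivisors.1 hd).1])

theorem splitting_of_mem_erase_splittingDivisors (hn : Squarefree n) {d : ℕ}
    (hd : d ∈ (splittingDivisors m n).erase n) :
    d * (n / d) = n ∧ 1 < d ∧ 1 < n / d ∧ d ≠ n / d := by
  obtain ⟨hdn, hd⟩ := mem_erase.1 hd
  obtain ⟨hdvd, hn0, hpd, -⟩ := mem_splittingDivisors.1 hd
  have hmul : d * (n / d) = n := Nat.mul_div_cancel' hdvd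
  have hd0 : d ≠ 0 := by rintro rfl; exact hn0 (by simpa using hmul.symm)
  have hd1 : d ≠ 1 := by
    rintro rfl
    exact hdn (Nat.minFac_eq_one_iff.1 (Nat.dvd_one.1 hpd)).symm
  have hq0 : n / d ≠ 0 := by intro h; rw [h, mul_zero] at hmul; exact hn0 hmul.symm
  have hq1 : n / d ≠ 1 := by intro h; rw [h, mul_one] at hmul; exact hdn hmul
  have hne : d ≠ n / d := fun h => by
    have hcop := coprime_div_of_mem_splittingDivisors hn hd
    rw [← h, Nat.coprime_self] at hcop
    exact hd1 hcop
  exact ⟨hmul, Nat.one_lt_iff_ne_zero_and_ne_one.2 ⟨hd0, hd1⟩,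
    Nat.one_lt_iff_ne_zero_and_ne_one.2 ⟨hq0, hq1⟩, hne⟩

theorem sum_coprimeSplittings_eq {M : Type*} [AddCommMonoid M] (hn : Squarefree n)
    (g : Finset ℕ → M) :
    ∑ P ∈ coprimeSplittings m n, g P = ∑ d ∈ (splittingDivisors m n).erase n, g {d, n / d} := by
  have hn0 : n ≠ 0 := hn.ne_zero
  symm
  refine sum_nbij (fun d => {d, n / d}) ?_ ?_ ?_ fun _ _ => rfl
  · intro d hd
    obtain ⟨hmul, hd1, hq1, hne⟩ := splitting_of_mem_erase_splittingDivisors hn hd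
    have hcop := coprime_div_of_mem_splittingDivisors hn (mem_erase.1 hd).2
    obtain ⟨hdvd, -, -, hgood⟩ := mem_splittingDivisors.1 (mem_erase.1 hd).2
    simp only [coprimeSplittings, mem_filter, mem_powerset, insert_subset_iff,
      singleton_subset_iff, mem_erase, Nat.mem_divisors, prod_pair hne, id,
      mem_insert, mem_singleton, exists_eq_or_imp, exists_eq_left]
    refine ⟨⟨⟨hd1.ne', hdvd, hn0⟩, hq1.ne', Nat.div_dvd_of_dvd hdvd, hn0⟩, card_pair hne, hmul,
      ?_, hgood⟩
    rintro x (rfl | rfl) y (rfl | rfl) hxy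
    exacts [absurd rfl hxy, hcop, hcop.symm, absurd rfl hxy]
  · intro d hd d' hd' h
    obtain ⟨hmul, hd1, -, -⟩ := splitting_of_mem_erase_splittingDivisors hn hd
    have hcop := coprime_div_of_mem_splittingDivisors hn (mem_erase.1 hd).2
    have hpd : n.minFac ∣ d := (mem_splittingDivisors.1 (mem_erase.1 hd).2).2.2.1
    have hpd' : n.minFac ∣ d' := (mem_splittingDivisors.1 (mem_erase.1 hd').2).2.2.1
    have hd' : d' = d ∨ d' = n / d := by
      have h : ({d, n / d} : Finset ℕ) = {d', n / d'} := h
      have : d' ∈ ({d, n / d} : Finset ℕ) := h ▸ mem_insert_self d' {n / d'}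
      simpa using this
    refine (hd'.resolve_right fun hq => ?_).symm
    have hn1 := Nat.minFac_eq_one_iff.1 (Nat.dvd_one.1 (hcop ▸ Nat.dvd_gcd hpd (hq ▸ hpd')))
    rw [hn1] at hmul
    exact hd1.ne' (Nat.eq_one_of_mul_eq_one_right hmul)
  · intro P hP
    simp only [mem_coe, coprimeSplittings, mem_filter, mem_powerset] at hP
    obtain ⟨hsub, hcard, hprod, -, hgood⟩ := hP
    obtain ⟨a, b, hab, rfl⟩ := card_eq_two.1 hcard
    have ha := mem_erase.1 (hsub (mem_insert_self a {b}))
    have hb := mem_erase.1 (hsub (mem_insert_of_mem (mem_singleton_self b)))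
    rw [prod_pair hab, id, id] at hprod
    simp only [mem_insert, mem_singleton, exists_eq_or_imp, exists_eq_left] at hgood
    have oriented : ∀ x y, x * y = n → y ≠ 1 → n.minFac ∣ x → (x % m = 1 ∨ y % m = 1) →
        {x, y} ∈ (fun d => ({d, n / d} : Finset ℕ)) '' ↑((splittingDivisors m n).erase n) := by
      intro x y hxy hy hpx hg
      have hx0 : x ≠ 0 := by rintro rfl; exact hn0 (by simp [← hxy])
      have hq : n / x = y := by rw [← hxy, Nat.mul_div_cancel_left _ (Nat.pos_of_ne_zero hx0)]
      refine ⟨x, mem_erase.2 ⟨fun hxn => hy ?_, mem_splittingDivisors.2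
        ⟨Dvd.intro y hxy, hn0, hpx, hq ▸ hg⟩⟩, by simp only [hq]⟩
      rw [hxn] at hxy
      exact (Nat.mul_eq_left hn0).1 hxy
    have hn1 : n ≠ 1 := fun h => ha.1 (Nat.eq_one_of_mul_eq_one_right (hprod.trans h))
    rcases (Nat.minFac_prime hn1).dvd_mul.1
      (hprod.symm ▸ Nat.minFac_dvd n : n.minFac ∣ a * b) with hpa | hpb
    · exact oriented a b hprod hb.1 hpa hgood
    · exact pair_comm b a ▸ oriented b a (by rw [mul_comm, hprod]) ha.1 hpb hgood.symm

theorem sum_coprimeSplittings_prod_eq {R : Type*} [CommSemiring R] (hn : Squarefree n)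
    (f : ℕ → R) :
    ∑ P ∈ coprimeSplittings m n, ∏ d ∈ P, f d =
      ∑ d ∈ (splittingDivisors m n).erase n, f d * f (n / d) := by
  rw [sum_coprimeSplittings_eq hn]
  exact sum_congr rfl fun d hd =>
    prod_pair (splitting_of_mem_erase_splittingDivisors hn hd).2.2.2

theorem sum_sigma_splittingDivisors_eq {M : Type*} [AddCommMonoid M] (hm : 1 < m)
    (hn : Squarefree n) (f : Finset ℕ → M) :
    ∑ x ∈ (splittingDivisors m n).sigma
        (fun d => coprimeFactorizations m d ×ˢ coprimeFactorizations m (n / d)),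
        f (x.2.1 ∪ x.2.2) =
      ∑ H ∈ coprimeFactorizations m n, #{F ∈ H.powerset | n.minFac ∣ F.prod id} • f H := by
  simp_rw [← sum_const, sum_sigma']
  refine sum_nbij' (fun x => ⟨x.2.1 ∪ x.2.2, x.2.1⟩) (fun x => ⟨x.2.prod id, x.2, x.1 \ x.2⟩)
    ?_ ?_ ?_ ?_ fun _ _ => rfl
  · rintro ⟨d, F, G⟩ hx
    simp only [mem_sigma, mem_product, mem_filter, mem_powerset] at hx ⊢
    obtain ⟨hd, hF, hG⟩ := hx
    obtain ⟨hdn, -, hpd, hgood⟩ := mem_splittingDivisors.1 hd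
    refine ⟨Nat.mul_div_cancel' hdn ▸ union_mem_coprimeFactorizations hF hG
      (coprime_div_of_mem_splittingDivisors hn hd) hgood, subset_union_left, ?_⟩
    rwa [(mem_filter.1 hF).2.1]
  · rintro ⟨H, F⟩ hx
    simp only [mem_sigma, mem_product, mem_filter, mem_powerset] at hx ⊢
    obtain ⟨hH, hFH, hpF⟩ := hx
    have hsdiff := prod_sdiff_mem_coprimeFactorizations hH hFH
    refine ⟨mem_splittingDivisors.2 ⟨?_, ne_zero_of_mem_coprimeFactorizations hH, hpF, ?_⟩,
      prod_mem_coprimeFactorizations_of_subset hH hFH, hsdiff⟩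
    · exact (mem_filter.1 hH).2.1 ▸ prod_dvd_prod_of_subset F H id hFH
    · rw [← (mem_filter.1 hsdiff).2.1]
      exact prod_mod_eq_one_or_prod_sdiff_mod_eq_one hm hH hFH
  · rintro ⟨d, F, G⟩ hx
    simp only [mem_sigma, mem_product] at hx
    obtain ⟨hd, hF, hG⟩ := hx
    have hdisj := disjoint_of_mem_coprimeFactorizations hF hG
      (coprime_div_of_mem_splittingDivisors hn hd)
    obtain rfl : F.prod id = d := (mem_filter.1 hF).2.1
    simp [union_sdiff_cancel_left hdisj]
  · rintro ⟨H, F⟩ hx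
    simp only [mem_sigma, mem_filter, mem_powerset] at hx
    simp [union_sdiff_of_subset hx.2.1]

section CharTwo

variable {R : Type*} [CommRing R] [CharP R 2]

theorem sum_splittingDivisors_factorizationSum_mul (hm : 1 < m) (hn : Squarefree n) (hn1 : 1 < n)
    (q : ℕ → R) :
    ∑ d ∈ splittingDivisors m n, factorizationSum m q d * factorizationSum m q (n / d) = q n := by
  calc ∑ d ∈ splittingDivisors m n, factorizationSum m q d * factorizationSum m q (n / d)
      = ∑ x ∈ (splittingDivisors m n).sigma
          (fun d => coprimeFactorizations m d ×ˢ coprimeFactorizations m (n / d)),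
          ∏ y ∈ x.2.1 ∪ x.2.2, q y := by
        rw [sum_sigma]
        refine sum_congr rfl fun d hd => ?_
        rw [sum_product, factorizationSum, factorizationSum, sum_mul_sum]
        refine sum_congr rfl fun F hF => sum_congr rfl fun G hG => (prod_union ?_).symm
        exact disjoint_of_mem_coprimeFactorizations hF hG
          (coprime_div_of_mem_splittingDivisors hn hd)
    _ = ∑ H ∈ coprimeFactorizations m n, 2 ^ (#H - 1) • ∏ y ∈ H, q y := by
        rw [sum_sigma_splittingDivisors_eq hm hn fun H => ∏ y ∈ H, q y]
        exact sum_congr rfl fun H hH => by rw [card_filter_minFac_dvd_prod hH hn1]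
    _ = q n := by
        rw [sum_eq_single_of_mem {n} (singleton_mem_coprimeFactorizations hn1)]
        · simp
        · intro H hH hne
          have hH2 := two_le_card_of_mem_coprimeFactorizations hH hn1 hne
          rw [nsmul_eq_mul, Nat.cast_pow, Nat.cast_ofNat, CharTwo.two_eq_zero,
            zero_pow (by omega), zero_mul]

theorem factorizationSum_eq_add_sum (hm : 1 < m) (hn : Squarefree n) (hn1 : 1 < n) (q : ℕ → R) :
    factorizationSum m q n = q n + ∑ d ∈ (splittingDivisors m n).erase n,
      factorizationSum m q d * factorizationSum m q (n / d) := by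
  rw [← sum_splittingDivisors_factorizationSum_mul hm hn hn1 q,
    ← add_sum_erase _ _ (self_mem_splittingDivisors hm (by omega)), Nat.div_self (by omega),
    factorizationSum_one, mul_one, add_assoc, CharTwo.add_self_eq_zero, add_zero]

end CharTwo

end

theorem mod_two_recursion_general (N : ℕ) (hsq : Squarefree N)
    (Q L : ℕ → ℤ)
    (hrec : ∀ n, n ∣ N → 1 < n →
      L n = Q n - ∑ F ∈ (n.divisors.erase 1).powerset.filter
          (fun F => F.card = 2 ∧ F.prod id = n ∧
            (∀ d ∈ F, ∀ e ∈ F, d ≠ e → Nat.Coprime d e) ∧ ∃ d ∈ F, d % 8 = 1),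
        F.prod (fun d => L d)) :
    ∀ n, n ∣ N → 1 < n →
      L n ≡ ∑ F ∈ (n.divisors.erase 1).powerset.filter
          (fun F => F.prod id = n ∧
            (∀ d ∈ F, ∀ e ∈ F, d ≠ e → Nat.Coprime d e) ∧
            (F.filter (fun d => d % 8 ≠ 1)).card ≤ 1),
        F.prod (fun d => Q d) [ZMOD 2] := by
  let q : ℕ → ZMod 2 := fun d => Q d
  intro n
  induction n using Nat.strong_induction_on with
  | _ n ih =>
  intro hnN hn
  have hsqn := hsq.squarefree_of_dvd hnN
  have hL : ∀ d < n, d ∣ n → 1 < d → (L d : ZMod 2) = factorizationSum 8 q d := by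
    intro d hdn hdvd hd
    rw [(ZMod.intCast_eq_intCast_iff _ _ 2).2 (ih d hdn (hdvd.trans hnN) hd)]
    push_cast
    rfl
  refine (ZMod.intCast_eq_intCast_iff _ _ 2).1 ?_
  calc (L n : ZMod 2)
      = q n + ∑ d ∈ (splittingDivisors 8 n).erase n, (L d : ZMod 2) * L (n / d) := by
        rw [hrec n hnN hn, Int.cast_sub, CharTwo.sub_eq_add, Int.cast_sum]
        simp_rw [Int.cast_prod]
        exact congrArg (q n + ·) (sum_coprimeSplittings_prod_eq hsqn _)
    _ = q n + ∑ d ∈ (splittingDivisors 8 n).erase n,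
          factorizationSum 8 q d * factorizationSum 8 q (n / d) := by
        refine congrArg (q n + ·) (sum_congr rfl fun d hd => ?_)
        obtain ⟨hmul, hd1, hq1, -⟩ := splitting_of_mem_erase_splittingDivisors hsqn hd
        have hdvd : d ∣ n := Dvd.intro _ hmul
        rw [hL d (hmul ▸ lt_mul_of_one_lt_right (by omega) hq1) hdvd hd1,
          hL (n / d) (Nat.div_lt_self (by omega) hd1) (Nat.div_dvd_of_dvd hdvd) hq1]
    _ = factorizationSum 8 q n := (factorizationSum_eq_add_sum (by norm_num) hsqn hn q).symm
    _ = _ := by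
        push_cast
        rfl

theorem mod_two_recursion (N : ℕ) (hN : 0 < N) (hsq : Squarefree N)
    (Q L : ℕ → ℤ) (hQ1 : Q 1 = 1) (hL1 : L 1 = 1)
    (hrec : ∀ n, n ∣ N → 1 < n →
      L n = Q n - ∑ F ∈ (n.divisors.erase 1).powerset.filter
          (fun F => F.card = 2 ∧ F.prod id = n ∧
            (∀ d ∈ F, ∀ e ∈ F, d ≠ e → Nat.Coprime d e) ∧ ∃ d ∈ F, d % 8 = 1),
        F.prod (fun d => L d)) :
    ∀ n, n ∣ N → 1 < n →
      L n ≡ ∑ F ∈ (n.divisors.erase 1).powerset.filter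
          (fun F => F.prod id = n ∧
            (∀ d ∈ F, ∀ e ∈ F, d ≠ e → Nat.Coprime d e) ∧
            (F.filter (fun d => d % 8 ≠ 1)).card ≤ 1),
        F.prod (fun d => Q d) [ZMOD 2] :=
  mod_two_recursion_general N hsq Q L hrec
end
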